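/- arXiv:1511.05196 — 3 statements merged into one kernel-verified Lean document; each statement's English description precedes it below -/
import Mathlib

section
/- Let G be a chord-free simple graph on n ≥ 4 vertices (i.e., no cycle of length at least 4 in G has a chord). Then G has at most 2n - 4 edges. -/
/-!
Every finite chord-free graph has a vertex of degree at most two: take an endpoint `u` of a
longest path `u = p₀, p₁, …, pₖ`, so that all neighbours of `u` lie on the path. If `u` had two
neighbours `pᵢ, pⱼ` with `2 ≤ i < j`, then `u p₁ … pⱼ u` would be a cycle of length `j + 1 ≥ 4`
with chord `u pᵢ`. Deleting such a vertex costs at most two edges, which reduces the bound to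
`n = 4`. There a graph with five edges has two vertices adjacent to everything, i.e. an edge `bd`
with two common neighbours `a, c`, and `a b c d a` is a 4-cycle with chord `bd`.
-/

open SimpleGraph

/-- A simple graph is chord-free if for every cycle of length at least 4,
every edge of the graph joining two vertices of the cycle is an edge of the cycle
(i.e. no cycle of length at least 4 has a chord). -/
def ChordFree {V : Type*} (G : SimpleGraph V) : Prop :=
  ∀ ⦃v : V⦄ (c : G.Walk v v), c.IsCycle → 4 ≤ c.length →
    ∀ ⦃x y : V⦄, x ∈ c.support → y ∈ c.support → G.Adj x y → s(x, y) ∈ c.edges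

open Finset

namespace SimpleGraph

variable {V : Type*} {G : SimpleGraph V} {u v x : V}

lemma Walk.IsPath.snd_eq_of_mem_edges {p : G.Walk u v} (hp : p.IsPath) (h : s(u, x) ∈ p.edges) :
    p.snd = x :=
  hp.snd_of_toSubgraph_adj (Walk.adj_toSubgraph_iff_mem_edges.mpr h)

lemma two_mul_card_edgeFinset_le [Fintype V] [DecidableRel G.Adj] :
    2 * #G.edgeFinset ≤ Fintype.card V * (Fintype.card V - 2) +
      #{v | G.degree v = Fintype.card V - 1} := by
  calc 2 * #G.edgeFinset = ∑ v, G.degree v := G.sum_degrees_eq_twice_card_edges.symm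
    _ ≤ ∑ v, (Fintype.card V - 2 + if G.degree v = Fintype.card V - 1 then 1 else 0) :=
      sum_le_sum fun v _ ↦ by
        have := G.degree_lt_card_verts v
        split_ifs <;> omega
    _ = _ := by rw [sum_add_distrib, sum_const, card_univ, smul_eq_mul, sum_boole, Nat.cast_id]

end SimpleGraph

namespace ChordFree

variable {V W : Type*} {G : SimpleGraph V} {u v b d : V}

lemma comap {H : SimpleGraph W} (hG : ChordFree G) (f : H ↪g G) :
    ChordFree H := by
  intro v c hc hlen x y hx hy hxy
  have hmem := hG (c.map f.toHom) (hc.map f.injective) (by simpa using hlen)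
    (by rw [Walk.support_map]; exact List.mem_map_of_mem hx)
    (by rw [Walk.support_map]; exact List.mem_map_of_mem hy) (f.map_adj_iff.mpr hxy)
  rw [Walk.edges_map, List.mem_map] at hmem
  obtain ⟨e, he, hfe⟩ := hmem
  rwa [← Sym2.map.injective f.injective (hfe.trans (Sym2.map_mk _ _ _).symm)]

lemma subsingleton_commonNeighbors (hG : ChordFree G) (hbd : G.Adj b d) :
    (G.commonNeighbors b d).Subsingleton := by
  rintro a ⟨hba, hda⟩ c ⟨hbc, hdc⟩
  rw [mem_neighborSet] at hba hda hbc hdc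
  by_contra hac
  let C : G.Walk a a := .cons hba.symm (.cons hbc (.cons hdc.symm (.cons hda .nil)))
  have hC : C.IsCycle := by
    simp [C, Walk.cons_isCycle_iff, hba.ne, hba.ne', hbc.ne, hdc.ne', hda.ne, hda.ne', hac,
      Ne.symm hac, hbd.ne]
  have := hG C hC (by simp [C]) (by simp [C]) (by simp [C]) hbd
  simp [C, hba.ne, hbc.ne, hdc.ne, hda.ne, hbd.ne, hbd.ne'] at this

lemma not_adj_getVert_of_lt (hG : ChordFree G) {p : G.Walk u v} (hp : p.IsPath)
    {i j : ℕ} (hi : 2 ≤ i) (hij : i < j) (hj : j ≤ p.length) (hui : G.Adj u (p.getVert i)) :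
    ¬ G.Adj u (p.getVert j) := by
  intro huj
  have hne {k l : ℕ} (hkl : k ≠ l) (hk : k ≤ p.length) (hl : l ≤ p.length) :
      p.getVert k ≠ p.getVert l :=
    hp.getVert_injOn.ne hk hl hkl
  have hq : (p.take j).IsPath := hp.take j
  have hsnd {k : ℕ} (hk : 2 ≤ k) (hkl : k ≤ p.length) : (p.take j).snd ≠ p.getVert k := by
    rw [Walk.snd, Walk.take_getVert]
    exact hne (by omega) (by omega) hkl
  have hC : (Walk.cons huj.symm (p.take j)).IsCycle := by
    refine (Walk.cons_isCycle_iff _ _).mpr ⟨hq, fun h ↦ ?_⟩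
    rw [Sym2.eq_swap] at h
    exact hsnd (by omega) hj (hq.snd_eq_of_mem_edges h)
  have hi_mem : p.getVert i ∈ (p.take j).support :=
    Walk.mem_support_iff_exists_getVert.mpr ⟨i, by simp [hij.le], by simp; omega⟩
  have hchord := hG _ hC (by simp; omega) (by simp) (List.mem_cons_of_mem _ hi_mem) hui
  rw [Walk.edges_cons, List.mem_cons] at hchord
  rcases hchord with h | h
  · rw [Sym2.eq_swap, Sym2.congr_left] at h
    exact hne hij.ne (by omega) hj h
  · exact hsnd hi (by omega) (hq.snd_eq_of_mem_edges h)

lemma degree_le_two_of_forall_adj_mem_support [Fintype (G.neighborSet u)]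
    (hG : ChordFree G) {p : G.Walk u v} (hp : p.IsPath) (h : ∀ x, G.Adj u x → x ∈ p.support) :
    G.degree u ≤ 2 := by
  classical
  have hindex {x : V} (hx : x ∈ (G.neighborFinset u).erase p.snd) :
      ∃ i, 2 ≤ i ∧ i ≤ p.length ∧ p.getVert i = x := by
    obtain ⟨hx1, hux⟩ := mem_erase.mp hx
    rw [mem_neighborFinset] at hux
    obtain ⟨i, rfl, hi⟩ := Walk.mem_support_iff_exists_getVert.mp (h x hux)
    refine ⟨i, ?_, hi, rfl⟩
    by_contra! hi2
    interval_cases i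
    · exact hux.ne (p.getVert_zero).symm
    · exact hx1 rfl
  have hcard : #((G.neighborFinset u).erase p.snd) ≤ 1 := by
    refine card_le_one.mpr fun x hx y hy ↦ ?_
    obtain ⟨i, hi, hil, rfl⟩ := hindex hx
    obtain ⟨j, hj, hjl, rfl⟩ := hindex hy
    have hui := (mem_neighborFinset _ _ _).mp (mem_of_mem_erase hx)
    have huj := (mem_neighborFinset _ _ _).mp (mem_of_mem_erase hy)
    rcases lt_trichotomy i j with hij | rfl | hij
    · exact (hG.not_adj_getVert_of_lt hp hi hij hjl hui huj).elim
    · rfl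
    · exact (hG.not_adj_getVert_of_lt hp hj hij hil huj hui).elim
  have := pred_card_le_card_erase (s := G.neighborFinset u) (a := p.snd)
  rw [card_neighborFinset_eq_degree] at this
  omega

lemma exists_degree_le_two [Fintype V] [Nonempty V] [DecidableRel G.Adj]
    (hG : ChordFree G) : ∃ v, G.degree v ≤ 2 := by
  obtain ⟨u, t, p, hp, hmax⟩ := Walk.exists_isPath_forall_isPath_length_le_length G
  refine ⟨u, hG.degree_le_two_of_forall_adj_mem_support hp fun x hux ↦ ?_⟩
  by_contra hx
  have := hmax x t (.cons hux.symm p) (hp.cons hx)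
  simp at this

lemma card_le_three_of_isUniversal [Fintype V] (hG : ChordFree G) (hbd : b ≠ d)
    (hb : G.IsUniversal b) (hd : G.IsUniversal d) : Fintype.card V ≤ 3 := by
  classical
  have hsub : ∀ a ∈ ({b, d} : Finset V)ᶜ, a ∈ G.commonNeighbors b d := by
    intro a ha
    simp only [mem_compl, mem_insert, mem_singleton, not_or] at ha
    exact ⟨hb (Ne.symm ha.1), hd (Ne.symm ha.2)⟩
  have hcompl : #({b, d} : Finset V)ᶜ ≤ 1 :=
    card_le_one.mpr fun a ha c hc ↦
      hG.subsingleton_commonNeighbors (hb hbd) (hsub a ha) (hsub c hc)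
  rw [card_compl, card_pair hbd] at hcompl
  omega

lemma card_edgeFinset_le_four [Fintype V] [DecidableRel G.Adj] (hG : ChordFree G)
    (hV : Fintype.card V = 4) : #G.edgeFinset ≤ 4 := by
  by_contra! h
  have := G.two_mul_card_edgeFinset_le
  have h8 : Fintype.card V * (Fintype.card V - 2) = 8 := by rw [hV]
  obtain ⟨b, hb, d, hd, hbd⟩ :=
    one_lt_card.mp (show 1 < #{v | G.degree v = Fintype.card V - 1} by omega)
  simp only [mem_filter, mem_univ, true_and, degree_eq_card_sub_one] at hb hd
  have := hG.card_le_three_of_isUniversal hbd hb hd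
  omega

end ChordFree

theorem chordFree_sparsity_general {V : Type*} [Fintype V]
    (G : SimpleGraph V) [DecidableRel G.Adj]
    (hn : 4 ≤ Fintype.card V) (h : ChordFree G) :
    G.edgeFinset.card ≤ 2 * Fintype.card V - 4 := by
  classical
  obtain ⟨n, hcard⟩ : ∃ n, Fintype.card V = n := ⟨_, rfl⟩
  rw [hcard] at hn ⊢
  induction n, hn using Nat.le_induction generalizing V with
  | base => exact h.card_edgeFinset_le_four hcard
  | succ n hn ih =>
    have : Nonempty V := Fintype.card_pos_iff.mp (by omega)
    obtain ⟨v, hv⟩ := h.exists_degree_le_two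
    have hcard' : Fintype.card ↥({v}ᶜ : Set V) = n := by
      rw [Fintype.card_compl_set, Set.card_singleton]
      omega
    have hH := ih (G.induce {v}ᶜ) (h.comap (Embedding.induce _)) hcard'
    rw [card_edgeFinset_induce_compl_singleton, card_edgeFinset_deleteIncidenceSet] at hH
    omega

theorem chordFree_sparsity {V : Type*} [Fintype V] [DecidableEq V]
    (G : SimpleGraph V) [DecidableRel G.Adj]
    (hn : 4 ≤ Fintype.card V) (h : ChordFree G) :
    G.edgeFinset.card ≤ 2 * Fintype.card V - 4 :=
  chordFree_sparsity_general G hn h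
end

section
/- Every simple graph G on n ≥ 4 vertices with more than 2n - 4 edges contains a cycle of length at least 4 together with a chord of that cycle. -/
/-!
Remove vertices of degree at most two one at a time: each removal costs at most two edges, so
the edge bound survives until either every degree is at least three or four vertices are left.
In the first case let `p` be a longest path, starting at `u`; every neighbour of `u` lies on `p`,
so three of them sit at positions `0 < i < j < k`, and closing the initial segment of `p` up to
position `k` by the edge back to `u` gives a cycle of length `k + 1 ≥ 4` with chord `u`–`p_j`.
On four vertices, five edges leave a triangle on the other three vertices together with two
edges at the removed one, i.e. `K₄` minus at most one edge.
-/

open SimpleGraph Finset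

namespace SimpleGraph

variable {V W : Type*} {G : SimpleGraph V}

def HasChordedCycle (G : SimpleGraph V) : Prop :=
  ∃ (v : V) (c : G.Walk v v), c.IsCycle ∧ 4 ≤ c.length ∧
    ∃ x y : V, x ∈ c.support ∧ y ∈ c.support ∧ G.Adj x y ∧ s(x, y) ∉ c.edges

theorem HasChordedCycle.map {H : SimpleGraph W} (f : G ↪g H) (hG : G.HasChordedCycle) :
    H.HasChordedCycle := by
  obtain ⟨v, c, hc, hlen, x, y, hx, hy, hxy, hchord⟩ := hG
  refine ⟨f v, c.map f.toHom, hc.map f.injective, by rwa [Walk.length_map], f x, f y,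
    by simpa using hx, by simpa using hy, f.map_adj_iff.2 hxy, ?_⟩
  rw [Walk.edges_map, ← Sym2.map_mk]
  exact mt (List.mem_map_of_injective (Sym2.map.injective f.injective)).1 hchord

theorem hasChordedCycle_of_isPath_of_adj_getVert {u v : V} {p : G.Walk u v} (hp : p.IsPath)
    {i j : ℕ} (hi : 2 ≤ i) (hij : i < j) (hj : j ≤ p.length)
    (hui : G.Adj u (p.getVert i)) (huj : G.Adj u (p.getVert j)) : G.HasChordedCycle := by
  have hne : ∀ k ≤ p.length, ∀ l ≤ p.length, k ≠ l → p.getVert k ≠ p.getVert l :=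
    fun k hk l hl hkl h => hkl (hp.getVert_injOn hk hl h)
  set q := p.take j
  have hq : q.IsPath := hp.take j
  have hq_snd : ∀ w, s(u, w) ∈ q.edges → w = p.getVert 1 := fun w hw => by
    rw [hq.eq_snd_of_mem_edges hw, Walk.snd, Walk.take_getVert, min_eq_right (by omega)]
  refine ⟨_, .cons huj.symm q, ?_, ?_, u, p.getVert i, ?_, ?_, hui, ?_⟩
  · refine (Walk.cons_isCycle_iff _ _).2 ⟨hq, fun h => hne j hj 1 (by omega) (by omega) ?_⟩
    exact hq_snd _ (Sym2.eq_swap ▸ h)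
  · simp only [Walk.length_cons, q, Walk.take_length]
    omega
  · simp
  · rw [Walk.support_cons, ← min_eq_right hij.le, ← Walk.take_getVert]
    exact List.mem_cons_of_mem _ (Walk.getVert_mem_support _ _)
  · rw [Walk.edges_cons, List.mem_cons, not_or, Sym2.eq_swap, Sym2.congr_left, Sym2.eq_swap]
    exact ⟨hne i (by omega) j hj hij.ne,
      fun h => hne i (by omega) 1 (by omega) (by omega) (hq_snd _ h)⟩

theorem hasChordedCycle_of_isPath_of_adj {u v x y z : V} {p : G.Walk u v} (hp : p.IsPath)
    (hx : x ∈ p.support) (hy : y ∈ p.support) (hz : z ∈ p.support)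
    (hux : G.Adj u x) (huy : G.Adj u y) (huz : G.Adj u z) (hxy : x ≠ y) (hxz : x ≠ z)
    (hyz : y ≠ z) : G.HasChordedCycle := by
  have key : ∀ i ≤ p.length, ∀ j ≤ p.length, 2 ≤ i → 2 ≤ j → i ≠ j →
      G.Adj u (p.getVert i) → G.Adj u (p.getVert j) → G.HasChordedCycle := by
    intro i hi j hj hi₂ hj₂ hij hui huj
    rcases hij.lt_or_gt with hij | hji
    · exact hasChordedCycle_of_isPath_of_adj_getVert hp hi₂ hij hj hui huj
    · exact hasChordedCycle_of_isPath_of_adj_getVert hp hj₂ hji hi huj hui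
  obtain ⟨i, rfl, hi⟩ := Walk.mem_support_iff_exists_getVert.1 hx
  obtain ⟨j, rfl, hj⟩ := Walk.mem_support_iff_exists_getVert.1 hy
  obtain ⟨k, rfl, hk⟩ := Walk.mem_support_iff_exists_getVert.1 hz
  have hpos : ∀ {l}, G.Adj u (p.getVert l) → l ≠ 0 := by rintro l h rfl; simp at h
  have := hpos hux; have := hpos huy; have := hpos huz
  replace hxy : i ≠ j := by rintro rfl; exact hxy rfl
  replace hxz : i ≠ k := by rintro rfl; exact hxz rfl
  replace hyz : j ≠ k := by rintro rfl; exact hyz rfl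
  by_cases hi₁ : i = 1
  · exact key j hj k hk (by omega) (by omega) hyz huy huz
  by_cases hj₁ : j = 1
  · exact key i hi k hk (by omega) (by omega) hxz hux huz
  · exact key i hi j hj (by omega) (by omega) hxy hux huy

theorem hasChordedCycle_of_adj {u x y z : V} (hux : G.Adj u x) (huy : G.Adj u y)
    (huz : G.Adj u z) (hxy : G.Adj x y) (hyz : G.Adj y z) (hxz : x ≠ z) : G.HasChordedCycle := by
  have hp : (Walk.cons hux (.cons hxy (.cons hyz .nil))).IsPath := by
    simp [hux.ne, huy.ne, huz.ne, hxy.ne, hyz.ne, hxz]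
  exact hasChordedCycle_of_isPath_of_adj hp (by simp) (by simp) (by simp) hux huy huz hxy.ne hxz
    hyz.ne

theorem hasChordedCycle_of_forall_three_le_degree [Fintype V] [DecidableRel G.Adj] [Nonempty V]
    (h : ∀ v, 3 ≤ G.degree v) : G.HasChordedCycle := by
  classical
  obtain ⟨w⟩ := ‹Nonempty V›
  have : Nonempty (Σ u v, G.Path u v) := ⟨⟨w, w, Path.nil⟩⟩
  obtain ⟨⟨u, v, p⟩, hmax⟩ := Finite.exists_max fun p : Σ u v, G.Path u v => p.2.2.1.length
  have hN : ∀ w, G.Adj u w → w ∈ p.1.support := fun w huw => by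
    by_contra hw
    simpa using hmax ⟨w, v, ⟨.cons huw.symm p.1, p.2.cons hw⟩⟩
  obtain ⟨x, hx, y, hy, z, hz, hxy, hxz, hyz⟩ :=
    Finset.two_lt_card.1 ((h u).trans_eq (G.card_neighborFinset_eq_degree u).symm)
  rw [mem_neighborFinset] at hx hy hz
  exact hasChordedCycle_of_isPath_of_adj p.2 (hN x hx) (hN y hy) (hN z hz) hx hy hz hxy hxz hyz

theorem eq_top_of_card_choose_two_le [Fintype V] [DecidableEq V] [DecidableRel G.Adj]
    (h : (Fintype.card V).choose 2 ≤ #G.edgeFinset) : G = ⊤ :=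
  edgeFinset_inj.1 <| eq_of_subset_of_card_le (edgeFinset_mono le_top)
    (by rwa [card_edgeFinset_top_eq_card_choose_two])

theorem card_edgeFinset_induce_compl_singleton_eq_sub_degree [Fintype V] [DecidableEq V]
    [DecidableRel G.Adj] (v : V) : #(G.induce {v}ᶜ).edgeFinset = #G.edgeFinset - G.degree v := by
  rw [card_edgeFinset_induce_compl_singleton, card_edgeFinset_deleteIncidenceSet]

theorem hasChordedCycle_of_card_eq_four [Fintype V] [DecidableEq V] [DecidableRel G.Adj]
    (hV : Fintype.card V = 4) (hE : 4 < #G.edgeFinset) : G.HasChordedCycle := by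
  by_cases hdeg : ∀ v, 3 ≤ G.degree v
  · have : Nonempty V := Fintype.card_pos_iff.1 (by omega)
    exact hasChordedCycle_of_forall_three_le_degree hdeg
  obtain ⟨v, hv⟩ := not_forall.1 hdeg
  have hcard : Fintype.card ({v}ᶜ : Set V) = 3 := by simp [filter_ne', hV]
  have hH := card_edgeFinset_induce_compl_singleton_eq_sub_degree (G := G) v
  have hH₃ := (G.induce {v}ᶜ).card_edgeFinset_le_card_choose_two
  rw [hcard, Nat.choose_two_right] at hH₃
  have htop : G.induce {v}ᶜ = ⊤ :=
    eq_top_of_card_choose_two_le (by rw [hcard, Nat.choose_two_right]; omega)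
  have hadj : ∀ x y, x ≠ v → y ≠ v → x ≠ y → G.Adj x y := fun x y hx hy hxy => by
    simpa [hxy, Subtype.ext_iff] using congrArg (·.Adj ⟨x, hx⟩ ⟨y, hy⟩) htop
  obtain ⟨a, ha, b, hb, hab⟩ := Finset.one_lt_card.1 <| show 1 < #(G.neighborFinset v) by
    rw [card_neighborFinset_eq_degree]; omega
  obtain ⟨c, -, hc⟩ := exists_mem_notMem_of_card_lt_card (s := {v, a, b}) (t := univ) <| by
    rw [card_univ, hV]
    exact card_le_three.trans_lt (by norm_num)
  simp only [mem_insert, mem_singleton, not_or] at hc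
  rw [mem_neighborFinset] at ha hb
  exact hasChordedCycle_of_adj ha.symm (hadj a b ha.ne' hb.ne' hab)
    (hadj a c ha.ne' hc.1 (Ne.symm hc.2.1)) hb (hadj b c hb.ne' hc.1 (Ne.symm hc.2.2))
    (Ne.symm hc.1)

theorem hasChordedCycle_of_two_mul_card_sub_four_lt [Fintype V] [DecidableEq V]
    [DecidableRel G.Adj] (hV : 4 ≤ Fintype.card V)
    (hE : 2 * Fintype.card V - 4 < #G.edgeFinset) : G.HasChordedCycle := by
  induction hn : Fintype.card V using Nat.strong_induction_on generalizing V with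
  | _ n ih =>
    rcases hV.eq_or_lt with h₄ | h₅
    · exact hasChordedCycle_of_card_eq_four h₄.symm (by omega)
    by_cases hdeg : ∀ v, 3 ≤ G.degree v
    · have : Nonempty V := Fintype.card_pos_iff.1 (by omega)
      exact hasChordedCycle_of_forall_three_le_degree hdeg
    obtain ⟨v, hv⟩ := not_forall.1 hdeg
    have hcard : Fintype.card ({v}ᶜ : Set V) = n - 1 := by simp [filter_ne', hn]
    have hH := card_edgeFinset_induce_compl_singleton_eq_sub_degree (G := G) v
    exact (ih (n - 1) (by omega) (G := G.induce {v}ᶜ) (by omega) (by omega) hcard).map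
      (Embedding.induce _)

end SimpleGraph

/-- Every simple graph on `n ≥ 4` vertices with more than `2n - 4` edges contains a cycle of
length at least 4 together with a chord of that cycle. -/
theorem dense_graph_has_chorded_cycle {V : Type*} [Fintype V] [DecidableEq V]
    (G : SimpleGraph V) [DecidableRel G.Adj]
    (hn : 4 ≤ Fintype.card V) (hE : 2 * Fintype.card V - 4 < G.edgeFinset.card) :
    ∃ (v : V) (c : G.Walk v v), c.IsCycle ∧ 4 ≤ c.length ∧
      ∃ x y : V, x ∈ c.support ∧ y ∈ c.support ∧ G.Adj x y ∧ s(x, y) ∉ c.edges :=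
  hasChordedCycle_of_two_mul_card_sub_four_lt hn hE
end

section
/- For n ≥ 4, there exists a chord-free simple graph on n vertices with exactly 2n - 4 edges, namely the complete bipartite graph K_{2,n-2}. -/
/-!
A vertex of degree at most two on a cycle has its two cycle edges as its only edges, so no edge
at such a vertex can be a chord. In `K_{2,m}` every edge has an endpoint on the side of size `m`,
and those vertices have degree two; hence `K_{2,m}` is chord-free, and it has `2m` edges.
-/

open SimpleGraph

namespace SimpleGraph

variable {V : Type*} {G : SimpleGraph V}

theorem Walk.IsCycle.mk_mem_edges_of_encard_neighborSet_le_two {u y x : V} {c : G.Walk u u}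
    (hc : c.IsCycle) (hy : y ∈ c.support) (hdeg : (G.neighborSet y).encard ≤ 2)
    (hadj : G.Adj y x) : s(y, x) ∈ c.edges := by
  have hcard := hc.ncard_neighborSet_toSubgraph_eq_two hy
  have hfin : (c.toSubgraph.neighborSet y).Finite := Set.finite_of_ncard_ne_zero (by omega)
  have heq : c.toSubgraph.neighborSet y = G.neighborSet y :=
    hfin.eq_of_subset_of_encard_le (c.toSubgraph.neighborSet_subset y)
      (by rwa [← hfin.cast_ncard_eq, hcard])
  rw [← Walk.adj_toSubgraph_iff_mem_edges, ← Subgraph.mem_neighborSet, heq]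
  exact hadj

theorem chordFree_of_forall_adj_encard_neighborSet_le_two
    (h : ∀ ⦃x y⦄, G.Adj x y → (G.neighborSet x).encard ≤ 2 ∨ (G.neighborSet y).encard ≤ 2) :
    ChordFree G := by
  intro v c hc _ x y hx hy hxy
  rcases h hxy with hdeg | hdeg
  · exact hc.mk_mem_edges_of_encard_neighborSet_le_two hx hdeg hxy
  · rw [Sym2.eq_swap]
    exact hc.mk_mem_edges_of_encard_neighborSet_le_two hy hdeg hxy.symm

end SimpleGraph

variable {α β : Type*}

theorem neighborSet_inr_completeBipartiteGraph (b : β) :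
    (completeBipartiteGraph α β).neighborSet (.inr b) = Set.range Sum.inl := by
  ext (a | b') <;> simp

theorem encard_neighborSet_inr_completeBipartiteGraph (b : β) :
    ((completeBipartiteGraph α β).neighborSet (.inr b)).encard = ENat.card α := by
  rw [neighborSet_inr_completeBipartiteGraph, ← Set.image_univ, Sum.inl_injective.encard_image,
    Set.encard_univ]

theorem chordFree_completeBipartiteGraph (hα : ENat.card α ≤ 2) :
    ChordFree (completeBipartiteGraph α β) := by
  refine chordFree_of_forall_adj_encard_neighborSet_le_two ?_
  rintro (a | b) (a' | b') hadj
  · simp at hadj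
  · exact .inr (encard_neighborSet_inr_completeBipartiteGraph b' ▸ hα)
  · exact .inl (encard_neighborSet_inr_completeBipartiteGraph b ▸ hα)
  · simp at hadj

theorem natCard_edgeSet_completeBipartiteGraph :
    Nat.card (completeBipartiteGraph α β).edgeSet = Nat.card α * Nat.card β := by
  rw [Nat.card_coe_set_eq, Set.ncard_def, encard_edgeSet_completeBipartiteGraph, ENat.toNat_mul]
  rfl

/-- For `n ≥ 4`, the complete bipartite graph `K_{2, n-2}` is a chord-free graph
on `n` vertices with exactly `2n - 4` edges: the density bound is tight. -/
theorem chordFree_density_tight (n : ℕ) (hn : 4 ≤ n) :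
    Fintype.card (Fin 2 ⊕ Fin (n - 2)) = n ∧
    ChordFree (completeBipartiteGraph (Fin 2) (Fin (n - 2))) ∧
    Nat.card (completeBipartiteGraph (Fin 2) (Fin (n - 2))).edgeSet = 2 * n - 4 := by
  refine ⟨?_, chordFree_completeBipartiteGraph (by simp), ?_⟩
  · rw [Fintype.card_sum, Fintype.card_fin, Fintype.card_fin]
    omega
  · simp only [natCard_edgeSet_completeBipartiteGraph, Nat.card_eq_fintype_card, Fintype.card_fin]
    omega
end
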